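/- In the random partition with p* = 2√(5 log n)/Δ^{1/3} and Δ ≤ (n/log n)^{3/4}, the maximum degree Δ* of the left-over subgraph G* satisfies Δ* ≤ p*·Δ + √(5 p*·Δ·log n) = O(√n) with high probability. -/

import Mathlib

/-!
The degree of `v` in `G*` is a sum of at most `Δ` independent Bernoulli(`p*`) indicators, so its
mean is at most `m = p*·Δ`. The moment generating function bound `E[e^{tX}] ≤ exp (m (e^t - 1))`
together with `e^t ≤ 1 + t + t²/2 + 2t³/9` on `[0, 1]` gives the Chernoff tail
`Pr[X ≥ (1 + t) m] ≤ exp (-m t² (1/2 - 2t/9))`; with `t = √(5 log n / m)` this is at most `n⁻²`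
provided `m ≥ 25 log n`. That lower bound holds because `p* ≤ 1` forces `Δ^{1/3} ≥ 2√(5 log n)`,
whence `m = 2√(5 log n)·Δ^{2/3} ≥ 40 log n`. A union bound over the `n` vertices leaves failure
probability `1/n`. Finally `Δ ≤ (n / log n)^{3/4}` gives `m ≤ 2√(5n)`, and `√(5 m log n) ≤ m`.
-/

open MeasureTheory ProbabilityTheory Real Finset

section Chernoff

variable {Ω ι : Type*}

def countTrue (s : Finset ι) (Y : ι → Ω → Bool) (ω : Ω) : ℝ := #{i ∈ s | Y i ω = true}

lemma countTrue_eq_sum (s : Finset ι) (Y : ι → Ω → Bool) :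
    countTrue s Y = ∑ i ∈ s, fun ω => if Y i ω = true then (1 : ℝ) else 0 := by
  ext ω
  rw [countTrue, natCast_card_filter, Finset.sum_apply]

lemma countTrue_le_card (s : Finset ι) (Y : ι → Ω → Bool) (ω : Ω) :
    countTrue s Y ω ≤ #s := by
  unfold countTrue
  exact_mod_cast card_filter_le _ _

variable [MeasurableSpace Ω] {μ : Measure Ω} [IsProbabilityMeasure μ]

lemma measurable_ite_eq_true {Y : Ω → Bool} (hY : Measurable Y) :
    Measurable fun ω => if Y ω = true then (1 : ℝ) else 0 :=
  (measurable_of_countable fun b : Bool => if b = true then (1 : ℝ) else 0).comp hY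

lemma measurable_countTrue {Y : ι → Ω → Bool} (hY : ∀ i, Measurable (Y i)) (s : Finset ι) :
    Measurable (countTrue s Y) := by
  rw [countTrue_eq_sum, Finset.sum_fn]
  exact Finset.measurable_sum s fun i _ => measurable_ite_eq_true (hY i)

lemma mgf_ite_eq {Y : Ω → Bool} (hY : Measurable Y) (t : ℝ) :
    mgf (fun ω => if Y ω = true then (1 : ℝ) else 0) μ t
      = 1 + μ.real {ω | Y ω = true} * (exp t - 1) := by
  have hA : MeasurableSet {ω | Y ω = true} := hY (measurableSet_singleton true)
  have hexp : (fun ω => exp (t * if Y ω = true then 1 else 0))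
      = fun ω => {ω | Y ω = true}.indicator (fun _ => exp t - 1) ω + 1 := by
    ext ω
    by_cases h : Y ω = true <;> simp [h]
  rw [mgf, hexp, integral_add ((integrable_const _).indicator hA) (integrable_const 1),
    integral_indicator_const _ hA, integral_const, probReal_univ]
  simp only [smul_eq_mul]
  ring

variable {Y : ι → Ω → Bool} {s : Finset ι} {p m t : ℝ}

lemma mgf_countTrue_le (hindep : iIndepFun Y μ) (hY : ∀ i, Measurable (Y i))
    (hp : ∀ i ∈ s, μ.real {ω | Y i ω = true} ≤ p) (hpm : p * #s ≤ m) (ht : 0 ≤ t) :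
    mgf (countTrue s Y) μ t ≤ exp (m * (exp t - 1)) := by
  have het : 0 ≤ exp t - 1 := by linarith [one_le_exp ht]
  have hindep' : iIndepFun (fun i ω => if Y i ω = true then (1 : ℝ) else 0) μ :=
    hindep.comp (fun _ b => if b = true then (1 : ℝ) else 0) fun _ => measurable_of_countable _
  rw [countTrue_eq_sum, hindep'.mgf_sum fun i => measurable_ite_eq_true (hY i)]
  calc ∏ i ∈ s, mgf (fun ω => if Y i ω = true then (1 : ℝ) else 0) μ t
      ≤ ∏ i ∈ s, exp (p * (exp t - 1)) := by
        refine Finset.prod_le_prod (fun i _ => mgf_nonneg) fun i hi => ?_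
        rw [mgf_ite_eq (hY i)]
        calc 1 + μ.real {ω | Y i ω = true} * (exp t - 1) ≤ p * (exp t - 1) + 1 := by
              nlinarith [hp i hi]
          _ ≤ exp (p * (exp t - 1)) := add_one_le_exp _
    _ = exp (p * #s * (exp t - 1)) := by
        rw [prod_const, ← exp_nat_mul]; ring_nf
    _ ≤ exp (m * (exp t - 1)) := exp_le_exp.2 (mul_le_mul_of_nonneg_right hpm het)

lemma exp_le_cubic (ht0 : 0 ≤ t) (ht1 : t ≤ 1) :
    exp t ≤ 1 + t + t ^ 2 / 2 + 2 / 9 * t ^ 3 := by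
  have h := exp_bound' ht0 ht1 (n := 3) (by norm_num)
  norm_num [Finset.sum_range_succ, Nat.factorial] at h
  linarith

theorem measureReal_countTrue_ge_le (hindep : iIndepFun Y μ) (hY : ∀ i, Measurable (Y i))
    (hp : ∀ i ∈ s, μ.real {ω | Y i ω = true} ≤ p) (hpm : p * #s ≤ m) (hm : 0 ≤ m)
    (ht0 : 0 ≤ t) (ht1 : t ≤ 1) :
    μ.real {ω | (1 + t) * m ≤ countTrue s Y ω} ≤ exp (-(m * t ^ 2 * (1 / 2 - 2 / 9 * t))) := by
  have hint : Integrable (fun ω => exp (t * countTrue s Y ω)) μ := by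
    refine .of_bound ((measurable_countTrue hY s).const_mul t).exp.aestronglyMeasurable
      (exp (t * #s)) (ae_of_all _ fun ω => ?_)
    rw [norm_of_nonneg (exp_nonneg _)]
    exact exp_le_exp.2 (mul_le_mul_of_nonneg_left (countTrue_le_card s Y ω) ht0)
  calc μ.real {ω | (1 + t) * m ≤ countTrue s Y ω}
      ≤ exp (-t * ((1 + t) * m)) * mgf (countTrue s Y) μ t :=
        measure_ge_le_exp_mul_mgf _ ht0 hint
    _ ≤ exp (-t * ((1 + t) * m)) * exp (m * (exp t - 1)) :=
        mul_le_mul_of_nonneg_left (mgf_countTrue_le hindep hY hp hpm ht0) (exp_nonneg _)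
    _ ≤ exp (-(m * t ^ 2 * (1 / 2 - 2 / 9 * t))) := by
        rw [← exp_add, exp_le_exp]
        nlinarith [exp_le_cubic ht0 ht1]

theorem measureReal_countTrue_ge_add_sqrt_le (hindep : iIndepFun Y μ) (hY : ∀ i, Measurable (Y i))
    (hp : ∀ i ∈ s, μ.real {ω | Y i ω = true} ≤ p) (hpm : p * #s ≤ m) (hm : 0 < m) {L : ℝ}
    (hL : 0 ≤ L) (hLm : 2000 * L ≤ 81 * m) :
    μ.real {ω | m + √(5 * m * L) ≤ countTrue s Y ω} ≤ exp (-(2 * L)) := by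
  -- `hLm` is `t ≤ 9 / 20`, and there `m t² (1/2 - 2t/9) = 5L (1/2 - 2t/9) ≥ 2L`.
  set t := √(5 * L / m)
  have ht2 : m * t ^ 2 = 5 * L := by
    rw [sq_sqrt (by positivity)]; field_simp
  have ht : t ≤ 9 / 20 := by
    rw [sqrt_le_left (by norm_num), div_le_iff₀ hm]; linarith
  have htm : (1 + t) * m = m + √(5 * m * L) := by
    have hsq : 5 * m * L = (t * m) ^ 2 := by linear_combination (-m) * ht2
    rw [hsq, sqrt_sq (by positivity)]
    ring
  calc μ.real {ω | m + √(5 * m * L) ≤ countTrue s Y ω}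
      ≤ exp (-(m * t ^ 2 * (1 / 2 - 2 / 9 * t))) := by
        rw [← htm]
        exact measureReal_countTrue_ge_le hindep hY hp hpm hm.le (sqrt_nonneg _) (by linarith)
    _ ≤ exp (-(2 * L)) := by
        rw [exp_le_exp, ht2]; nlinarith

theorem one_sub_card_mul_exp_le_measureReal_forall_countTrue_le {κ : Type*} [Fintype κ]
    (hindep : iIndepFun Y μ) (hY : ∀ i, Measurable (Y i)) (hp : ∀ i, μ.real {ω | Y i ω = true} ≤ p)
    (S : κ → Finset ι) (hpm : ∀ k, p * #(S k) ≤ m) (hm : 0 < m) {L : ℝ}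
    (hL : 0 ≤ L) (hLm : 2000 * L ≤ 81 * m) :
    1 - Fintype.card κ * exp (-(2 * L))
      ≤ μ.real {ω | ∀ k, countTrue (S k) Y ω ≤ m + √(5 * m * L)} := by
  set bad := ⋃ k, {ω | m + √(5 * m * L) ≤ countTrue (S k) Y ω}
  have hbad : μ.real bad ≤ Fintype.card κ * exp (-(2 * L)) := by
    calc μ.real bad ≤ ∑ k, μ.real {ω | m + √(5 * m * L) ≤ countTrue (S k) Y ω} :=
          measureReal_iUnion_fintype_le _
      _ ≤ ∑ _k : κ, exp (-(2 * L)) := Finset.sum_le_sum fun k _ =>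
          measureReal_countTrue_ge_add_sqrt_le hindep hY (fun i _ => hp i) (hpm k) hm hL hLm
      _ = Fintype.card κ * exp (-(2 * L)) := by simp
  have hsub : badᶜ ⊆ {ω | ∀ k, countTrue (S k) Y ω ≤ m + √(5 * m * L)} := by
    intro ω hω k
    simp only [bad, Set.mem_compl_iff, Set.mem_iUnion, Set.mem_ofPred_eq, not_exists, not_le] at hω
    exact (hω k).le
  have hbad_meas : MeasurableSet bad :=
    MeasurableSet.iUnion fun k => measurableSet_le measurable_const (measurable_countTrue hY _)
  calc 1 - Fintype.card κ * exp (-(2 * L)) ≤ 1 - μ.real bad := by linarith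
    _ = μ.real badᶜ := (probReal_compl_eq_one_sub hbad_meas).symm
    _ ≤ _ := measureReal_mono hsub

end Chernoff

section Exponents

variable {x c : ℝ}

lemma rpow_one_third_mul_rpow_two_thirds (hx : 0 < x) : x ^ (1 / 3 : ℝ) * x ^ (2 / 3 : ℝ) = x := by
  rw [← rpow_add hx]; norm_num

lemma rpow_two_thirds_eq_sq (hx : 0 ≤ x) : x ^ (2 / 3 : ℝ) = (x ^ (1 / 3 : ℝ)) ^ 2 := by
  rw [← rpow_natCast, ← rpow_mul hx]; norm_num

lemma div_rpow_one_third_mul_self (c : ℝ) (hx : 0 < x) :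
    c / x ^ (1 / 3 : ℝ) * x = c * x ^ (2 / 3 : ℝ) := by
  rw [div_mul_eq_mul_div, div_eq_iff (rpow_pos_of_pos hx _).ne', mul_assoc,
    mul_comm (x ^ (2 / 3 : ℝ)), rpow_one_third_mul_rpow_two_thirds hx]

lemma pow_three_le_mul_rpow_two_thirds (hc : 0 ≤ c) (hx : 0 ≤ x) (h : c ≤ x ^ (1 / 3 : ℝ)) :
    c ^ 3 ≤ c * x ^ (2 / 3 : ℝ) := by
  rw [rpow_two_thirds_eq_sq hx, pow_succ', pow_two, pow_two]
  gcongr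

lemma rpow_two_thirds_le_sqrt {y : ℝ} (hx : 0 ≤ x) (hy : 0 ≤ y) (h : x ≤ y ^ (3 / 4 : ℝ)) :
    x ^ (2 / 3 : ℝ) ≤ √y := by
  calc x ^ (2 / 3 : ℝ) ≤ (y ^ (3 / 4 : ℝ)) ^ (2 / 3 : ℝ) := by gcongr
    _ = √y := by rw [← rpow_mul hy, sqrt_eq_rpow]; norm_num

end Exponents

lemma two_sqrt_mul_rpow_two_thirds_le {L n x : ℝ} (hL : 0 < L) (hn : 0 ≤ n) (hx : 0 ≤ x)
    (h : x ≤ (n / L) ^ (3 / 4 : ℝ)) :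
    2 * √(5 * L) * x ^ (2 / 3 : ℝ) ≤ 2 * √5 * √n :=
  calc 2 * √(5 * L) * x ^ (2 / 3 : ℝ) ≤ 2 * √(5 * L) * √(n / L) := by
        gcongr; exact rpow_two_thirds_le_sqrt hx (by positivity) h
    _ = 2 * √5 * √n := by
        rw [mul_assoc, ← sqrt_mul (by positivity), show 5 * L * (n / L) = 5 * n by field_simp,
          sqrt_mul (by norm_num)]
        ring

lemma forty_mul_le_two_sqrt_mul_rpow_two_thirds {L x : ℝ} (hL : 1 / 5 ≤ L) (hx : 0 ≤ x)
    (h : 2 * √(5 * L) ≤ x ^ (1 / 3 : ℝ)) :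
    40 * L ≤ 2 * √(5 * L) * x ^ (2 / 3 : ℝ) := by
  have h1 : 1 ≤ √(5 * L) := one_le_sqrt.2 (by linarith)
  calc 40 * L ≤ 8 * √(5 * L) ^ 2 * √(5 * L) := by
        rw [sq_sqrt (by linarith)]; nlinarith
    _ = (2 * √(5 * L)) ^ 3 := by ring
    _ ≤ 2 * √(5 * L) * x ^ (2 / 3 : ℝ) := pow_three_le_mul_rpow_two_thirds (by positivity) hx h

theorem stmt6_general {V : Type*} [Fintype V]
    (G : SimpleGraph V) [DecidableRel G.Adj]
    (n Δ : ℕ) (hn : n = Fintype.card V) (hn2 : 2 ≤ n)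
    (hΔ : ∀ v, G.degree v ≤ Δ) (hΔpos : 0 < Δ)
    (hΔub : (Δ : ℝ) ≤ ((n : ℝ) / Real.log n) ^ ((3 : ℝ) / 4))
    (pstar : ℝ) (hp : pstar = 2 * Real.sqrt (5 * Real.log n) / (Δ : ℝ) ^ ((1 : ℝ) / 3))
    (μ : Measure (V → Bool)) [IsProbabilityMeasure μ]
    (hindep : iIndepFun (fun v (σ : V → Bool) => σ v) μ)
    (hmarg : ∀ v : V, μ {σ | σ v = true} = ENNReal.ofReal pstar) :
    (∃ c : ℝ, 1 ≤ c ∧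
      ENNReal.ofReal (1 - 1 / (n : ℝ) ^ c) ≤
        μ {σ | ∀ v : V,
          ((((G.neighborFinset v).filter (fun u => σ u = true)).card : ℝ)
            ≤ pstar * Δ + Real.sqrt (5 * (pstar * Δ) * Real.log n))}) ∧
    (∃ C : ℝ, 0 < C ∧
      pstar * Δ + Real.sqrt (5 * (pstar * Δ) * Real.log n) ≤ C * Real.sqrt n) := by
  have hn0 : (0 : ℝ) < n := by positivity
  have hL : 1 / 5 ≤ log n := by
    have := log_le_log (by norm_num) (show (2 : ℝ) ≤ n by exact_mod_cast hn2)
    linarith [log_two_gt_d9]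
  have hΔ0 : (0 : ℝ) < Δ := by exact_mod_cast hΔpos
  have hpstar0 : 0 ≤ pstar := by rw [hp]; positivity
  have hprob (v : V) : μ.real {σ | σ v = true} = pstar := by
    rw [measureReal_def, hmarg, ENNReal.toReal_ofReal hpstar0]
  have hpstar1 : pstar ≤ 1 := by
    obtain ⟨v⟩ : Nonempty V := Fintype.card_pos_iff.1 (by omega)
    exact hprob v ▸ measureReal_le_one
  have hm : pstar * Δ = 2 * √(5 * log n) * (Δ : ℝ) ^ (2 / 3 : ℝ) := by
    rw [hp, div_rpow_one_third_mul_self _ hΔ0]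
  have hm_lb : 40 * log n ≤ pstar * Δ := hm ▸ forty_mul_le_two_sqrt_mul_rpow_two_thirds hL hΔ0.le
    ((div_le_one (rpow_pos_of_pos hΔ0 _)).1 (hp ▸ hpstar1))
  have hm_ub : pstar * Δ ≤ 2 * √5 * √n :=
    hm ▸ two_sqrt_mul_rpow_two_thirds_le (by linarith) hn0.le hΔ0.le hΔub
  refine ⟨⟨1, le_rfl, ?_⟩, 4 * √5, by positivity, ?_⟩
  · rw [ENNReal.ofReal_le_iff_le_toReal (measure_ne_top _ _), ← measureReal_def]
    calc 1 - 1 / (n : ℝ) ^ (1 : ℝ) = 1 - Fintype.card V * exp (-(2 * log n)) := by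
          rw [rpow_one, exp_neg, mul_comm 2, exp_mul, exp_log hn0, rpow_two, ← hn]; field_simp
      _ ≤ _ := one_sub_card_mul_exp_le_measureReal_forall_countTrue_le hindep
          measurable_pi_apply (fun v => (hprob v).le) _
          (fun v => by gcongr; simpa using hΔ v) (by linarith) (by linarith) (by linarith)
  · have : √(5 * (pstar * Δ) * log n) ≤ pstar * Δ := by
      rw [sqrt_le_left (by linarith)]; nlinarith
    linarith

/-- In the random partition where each vertex independently joins the
left-over subgraph `G*` with probability `p* = 2√(5 log n)/Δ^{1/3}` (modeled by an
independent random indicator `σ : V → Bool`), if `Δ ≤ (n/log n)^{3/4}`, then with high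
probability the maximum degree of `G*` is at most `p*·Δ + √(5 p*·Δ·log n)`, and this
deterministic bound is `O(√n)`, i.e. at most `C·√n` for a universal constant `C`. -/
theorem stmt6 {V : Type*} [Fintype V] [DecidableEq V]
    (G : SimpleGraph V) [DecidableRel G.Adj]
    (n Δ : ℕ) (hn : n = Fintype.card V) (hn2 : 2 ≤ n)
    (hΔ : ∀ v, G.degree v ≤ Δ) (hΔpos : 0 < Δ)
    (hΔub : (Δ : ℝ) ≤ ((n : ℝ) / Real.log n) ^ ((3 : ℝ) / 4))
    (pstar : ℝ) (hp : pstar = 2 * Real.sqrt (5 * Real.log n) / (Δ : ℝ) ^ ((1 : ℝ) / 3))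
    (μ : Measure (V → Bool)) [IsProbabilityMeasure μ]
    (hindep : iIndepFun (fun v (σ : V → Bool) => σ v) μ)
    (hmarg : ∀ v : V, μ {σ | σ v = true} = ENNReal.ofReal pstar) :
    (∃ c : ℝ, 1 ≤ c ∧
      ENNReal.ofReal (1 - 1 / (n : ℝ) ^ c) ≤
        μ {σ | ∀ v : V,
          ((((G.neighborFinset v).filter (fun u => σ u = true)).card : ℝ)
            ≤ pstar * Δ + Real.sqrt (5 * (pstar * Δ) * Real.log n))}) ∧
    (∃ C : ℝ, 0 < C ∧
      pstar * Δ + Real.sqrt (5 * (pstar * Δ) * Real.log n) ≤ C * Real.sqrt n) :=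
  stmt6_general G n Δ hn hn2 hΔ hΔpos hΔub pstar hp μ hindep hmarg
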